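/- arXiv:2605.16500 — 2 statements merged into one kernel-verified Lean document; each statement's English description precedes it below -/
import Mathlib

section
/- Data-processing inequality for the smooth max-relative entropy: Let ε ∈ (0,1), let H, H' be finite-dimensional complex Hilbert spaces, let ρ, σ ∈ S(H), and let E be a trace-preserving completely positive map from operators on H to operators on H'. Then D_max^ε(E(ρ)‖E(σ)) ≤ D_max^ε(ρ‖σ). -/
/-!
Positivity of `E` turns `ρ' ≤ e^λ σ` into `E ρ' ≤ e^λ E σ`, so it suffices that `E` maps the
`ε`-ball around `ρ` into the `ε`-ball around `E ρ`, i.e. that the fidelity does not decrease.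
For this, `‖√ρ √σ‖₁` is the maximum of `Re tr X` over all `X` for which the block matrix
`[[ρ, X], [Xᴴ, σ]]` is positive semidefinite. The maximum is attained at `X = √ρ W √σ`, where
`√ρ √σ = W |√ρ √σ|` is a polar decomposition; the upper bound comes from writing the block matrix
as a Gram matrix `Nᴴ N` and taking polar decompositions of the two block columns of `N`.
Since `E ⊗ id₂` preserves positivity and `E` preserves the trace, `E X` is feasible for
`(E ρ, E σ)` with the same value `Re tr X`.
-/

open scoped BigOperators ComplexOrder Matrix
attribute [local instance] Classical.propDecidable

noncomputable section

namespace RobustStein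

variable {ι κ : Type*} [Fintype ι] [DecidableEq ι] [Fintype κ] [DecidableEq κ]

/-- A density matrix: positive semidefinite with unit trace. -/
def IsState (ρ : Matrix ι ι ℂ) : Prop := ρ.PosSemidef ∧ ρ.trace = 1

/-- Positive semidefinite square root (junk value `0` off the PSD cone). -/
def psdSqrt (M : Matrix ι ι ℂ) : Matrix ι ι ℂ := if h : M.PosSemidef then
  h.1.eigenvectorUnitary.1 * Matrix.diagonal (((↑) : ℝ → ℂ) ∘ Real.sqrt ∘ h.1.eigenvalues) *
    (star h.1.eigenvectorUnitary : Matrix ι ι ℂ) else 0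

/-- Trace norm `‖M‖₁ = tr √(MᴴM)`. -/
def traceNorm (M : Matrix ι ι ℂ) : ℝ := (psdSqrt (M.conjTranspose * M)).trace.re

/-- Fidelity `F(ρ,σ) = ‖√ρ√σ‖₁²`. -/
def fidelity (ρ σ : Matrix ι ι ℂ) : ℝ := traceNorm (psdSqrt ρ * psdSqrt σ) ^ 2

/-- Purified distance. -/
def purifiedDist (ρ σ : Matrix ι ι ℂ) : ℝ := Real.sqrt (1 - fidelity ρ σ)

/-- Matrix logarithm via functional calculus on the support (junk `0` off Hermitian). -/
def matLog (M : Matrix ι ι ℂ) : Matrix ι ι ℂ :=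
  if h : M.IsHermitian then h.cfc Real.log else 0

/-- Support inclusion `supp ρ ⊆ supp σ`, expressed as kernel inclusion. -/
def suppLE (ρ σ : Matrix ι ι ℂ) : Prop := ∀ v : ι → ℂ, σ.mulVec v = 0 → ρ.mulVec v = 0

/-- Umegaki relative entropy `D(ρ‖σ)`, equal to `+∞` when the support condition fails. -/
def relEnt (ρ σ : Matrix ι ι ℂ) : EReal :=
  if suppLE ρ σ then (((ρ * (matLog ρ - matLog σ)).trace.re : ℝ) : EReal) else ⊤

/-- Relative entropy of resource `D(ρ‖M) = inf_{σ∈M} D(ρ‖σ)`. -/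
def relEntSet (ρ : Matrix ι ι ℂ) (M : Set (Matrix ι ι ℂ)) : EReal := ⨅ σ ∈ M, relEnt ρ σ

/-- The set of type II error probabilities for tests with type I error at most ε. -/
def betaSet (ε : ℝ) (ρ σ : Matrix ι ι ℂ) : Set ℝ :=
  { b | ∃ X : Matrix ι ι ℂ, X.PosSemidef ∧ ((1 : Matrix ι ι ℂ) - X).PosSemidef ∧
        1 - ε ≤ ((ρ * X).trace).re ∧ b = ((σ * X).trace).re }

/-- Hypothesis testing relative entropy `D_H^ε(ρ‖σ) = - log min β`. -/
def DH (ε : ℝ) (ρ σ : Matrix ι ι ℂ) : EReal :=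
  if 0 < sInf (betaSet ε ρ σ) then ((- Real.log (sInf (betaSet ε ρ σ)) : ℝ) : EReal) else ⊤

/-- Hypothesis testing relative entropy between sets of states. -/
def DHSet (ε : ℝ) (A B : Set (Matrix ι ι ℂ)) : EReal := ⨅ ρ ∈ A, ⨅ σ ∈ B, DH ε ρ σ

/-- Max-relative entropy `D_max(ρ‖σ) = inf {λ : ρ ≤ e^λ σ}` (inf over empty set is `⊤`). -/
def Dmax (ρ σ : Matrix ι ι ℂ) : EReal :=
  ⨅ (l : ℝ) (_ : (((Real.exp l : ℂ)) • σ - ρ).PosSemidef), (l : EReal)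

/-- The ε-ball around ρ in purified distance. -/
def ball (ε : ℝ) (ρ : Matrix ι ι ℂ) : Set (Matrix ι ι ℂ) :=
  { ρ' | IsState ρ' ∧ purifiedDist ρ ρ' ≤ ε }

/-- Smooth max-relative entropy. -/
def DmaxSmooth (ε : ℝ) (ρ σ : Matrix ι ι ℂ) : EReal := ⨅ ρ' ∈ ball ε ρ, Dmax ρ' σ

/-- Smooth max-relative entropy between sets of states. -/
def DmaxSmoothSet (ε : ℝ) (A B : Set (Matrix ι ι ℂ)) : EReal :=
  ⨅ ρ ∈ A, ⨅ σ ∈ B, DmaxSmooth ε ρ σ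

/-- n-fold tensor (Kronecker) power `ρ^{⊗n}` on `H^{⊗n}` with index type `Fin n → κ`. -/
def tpow (ρ : Matrix κ κ ℂ) (n : ℕ) : Matrix (Fin n → κ) (Fin n → κ) ℂ :=
  Matrix.of fun x y => ∏ i, ρ (x i) (y i)

/-- Tensor product of operators on `H^{⊗n}` and `H^{⊗m}`. -/
def kron {n m : ℕ} (ρ : Matrix (Fin n → κ) (Fin n → κ) ℂ)
    (σ : Matrix (Fin m → κ) (Fin m → κ) ℂ) :
    Matrix (Fin (n + m) → κ) (Fin (n + m) → κ) ℂ :=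
  Matrix.of fun x y =>
    ρ (fun i => x (Fin.castAdd m i)) (fun i => y (Fin.castAdd m i)) *
    σ (fun j => x (Fin.natAdd n j)) (fun j => y (Fin.natAdd n j))

/-- Action of a permutation of the tensor factors: `π M π†`. -/
def permAct {n : ℕ} (π : Equiv.Perm (Fin n)) (M : Matrix (Fin n → κ) (Fin n → κ) ℂ) :
    Matrix (Fin n → κ) (Fin n → κ) ℂ :=
  Matrix.of fun x y => M (x ∘ π) (y ∘ π)

/-- Partial trace over the last tensor factor. -/
def ptraceLast {n : ℕ} (M : Matrix (Fin (n + 1) → κ) (Fin (n + 1) → κ) ℂ) :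
    Matrix (Fin n → κ) (Fin n → κ) ℂ :=
  Matrix.of fun x y => ∑ a : κ, M (Fin.snoc x a) (Fin.snoc y a)

/-- Partial trace over the last `k` tensor factors. -/
def ptraceRight (m k : ℕ) (M : Matrix (Fin (m + k) → κ) (Fin (m + k) → κ) ℂ) :
    Matrix (Fin m → κ) (Fin m → κ) ℂ :=
  Matrix.of fun x y => ∑ a : Fin k → κ, M (Fin.append x a) (Fin.append y a)

/-- Marginal of a state on `H^{⊗n}` on the `i`-th tensor factor. -/
def marginalAt {n : ℕ} (i : Fin n) (M : Matrix (Fin n → κ) (Fin n → κ) ℂ) : Matrix κ κ ℂ :=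
  Matrix.of fun a b => ∑ x : Fin n → κ, if x i = a then M x (Function.update x i b) else 0

/-- Replacer channel on the `i`-th tensor factor: `R_i^{(ω)}(M) = tr_i[M] ⊗_i ω`. -/
def replaceAt {n : ℕ} (i : Fin n) (ω : Matrix κ κ ℂ)
    (M : Matrix (Fin n → κ) (Fin n → κ) ℂ) : Matrix (Fin n → κ) (Fin n → κ) ℂ :=
  Matrix.of fun x y =>
    ω (x i) (y i) * ∑ a : κ, M (Function.update x i a) (Function.update y i a)

/-- The partial trace over the `i`-th tensor factor vanishes. -/
def ptrAtZero {n : ℕ} (i : Fin n) (X : Matrix (Fin n → κ) (Fin n → κ) ℂ) : Prop :=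
  ∀ x y : Fin n → κ, ∑ a : κ, X (Function.update x i a) (Function.update y i a) = 0

/-- Quantum Wasserstein distance of order 1. -/
def W1 {n : ℕ} (ω τ : Matrix (Fin n → κ) (Fin n → κ) ℂ) : ℝ :=
  sInf { c | ∃ X : Fin n → Matrix (Fin n → κ) (Fin n → κ) ℂ,
      (∀ i, (X i).IsHermitian) ∧ (∀ i, ptrAtZero i (X i)) ∧ ω - τ = ∑ i, X i ∧
      c = (1 / 2) * ∑ i, traceNorm (X i) }

/-- Binary entropy (with natural logarithm). -/
def binEnt (x : ℝ) : ℝ := -(x * Real.log x) - (1 - x) * Real.log (1 - x)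

/-- Smallest eigenvalue of a Hermitian matrix (junk `0` otherwise). -/
def lamMin (M : Matrix ι ι ℂ) : ℝ := if h : M.IsHermitian then ⨅ i, h.eigenvalues i else 0

/-- The family `V(H^{⊗n}, θ^{⊗m})` of vectors that are `θ` on `m` positions. -/
def vecSet (θ : κ → ℂ) (n m : ℕ) : Set ((Fin n → κ) → ℂ) :=
  { ψ | ∃ S : Finset (Fin n), S.card = m ∧
      ∃ Ω : ({ j : Fin n // j ∉ S } → κ) → ℂ,
        ψ = fun x => (∏ i ∈ S, θ (x i)) * Ω (fun j => x j.1) }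

/-- The support of the matrix ρ is contained in the span of `V`. -/
def suppInSpan (ρ : Matrix ι ι ℂ) (V : Set (ι → ℂ)) : Prop :=
  LinearMap.range (Matrix.toLin' ρ) ≤ Submodule.span ℂ V

/-- `θ ∈ H_A ⊗ H_E` is a (normalized) purification of `σ`. -/
def Purifies {dA dE : ℕ} (θ : Fin dA × Fin dE → ℂ) (σ : Matrix (Fin dA) (Fin dA) ℂ) : Prop :=
  (∑ p, Complex.normSq (θ p)) = 1 ∧
  ∀ a b, (∑ e, θ (a, e) * (starRingEnd ℂ) (θ (b, e))) = σ a b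

/-- Marginal on the A systems of a state on `(H_A ⊗ H_E)^{⊗n}`. -/
def margA {dA dE n : ℕ}
    (ρext : Matrix (Fin n → Fin dA × Fin dE) (Fin n → Fin dA × Fin dE) ℂ) :
    Matrix (Fin n → Fin dA) (Fin n → Fin dA) ℂ :=
  Matrix.of fun x y => ∑ e : Fin n → Fin dE,
    ρext (fun i => (x i, e i)) (fun i => (y i, e i))

/-- A generalized (n,r)-almost-iid state along `σA` (no permutation invariance required). -/
def IsGenAlmostIID {dA : ℕ} (n r : ℕ) (σA : Matrix (Fin dA) (Fin dA) ℂ)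
    (ρ : Matrix (Fin n → Fin dA) (Fin n → Fin dA) ℂ) : Prop :=
  IsState ρ ∧ ∃ (dE : ℕ) (θ : Fin dA × Fin dE → ℂ)
    (ρext : Matrix (Fin n → Fin dA × Fin dE) (Fin n → Fin dA × Fin dE) ℂ),
    Purifies θ σA ∧ IsState ρext ∧ margA ρext = ρ ∧
    suppInSpan ρext (vecSet θ n (n - r))

/-- An (n,r)-almost-iid state along `σA`. -/
def IsAlmostIID {dA : ℕ} (n r : ℕ) (σA : Matrix (Fin dA) (Fin dA) ℂ)
    (ρ : Matrix (Fin n → Fin dA) (Fin n → Fin dA) ℂ) : Prop :=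
  IsState ρ ∧ ∃ (dE : ℕ) (θ : Fin dA × Fin dE → ℂ)
    (ρext : Matrix (Fin n → Fin dA × Fin dE) (Fin n → Fin dA × Fin dE) ℂ),
    Purifies θ σA ∧ IsState ρext ∧
    (∀ π : Equiv.Perm (Fin n), ∀ x y, ρext (x ∘ π) (y ∘ π) = ρext x y) ∧
    margA ρext = ρ ∧
    suppInSpan ρext (vecSet θ n (n - r))

/-- The set `S^n(H, σ^{⊗(n-r)})` of (n,r)-almost-iid states along σ. -/
def almostIIDSet (dA n r : ℕ) (σA : Matrix (Fin dA) (Fin dA) ℂ) :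
    Set (Matrix (Fin n → Fin dA) (Fin n → Fin dA) ℂ) :=
  { ρ | IsAlmostIID n r σA ρ }

/-- The set `S̄^n(H, σ^{⊗(n-r)})` of generalized (n,r)-almost-iid states along σ. -/
def genAlmostIIDSet (dA n r : ℕ) (σA : Matrix (Fin dA) (Fin dA) ℂ) :
    Set (Matrix (Fin n → Fin dA) (Fin n → Fin dA) ℂ) :=
  { ρ | IsGenAlmostIID n r σA ρ }

/-- The Brandão–Plenio axioms for a family of sets of free states. -/
structure BPAxioms (d : ℕ)
    (M : ∀ n : ℕ, Set (Matrix (Fin n → Fin d) (Fin n → Fin d) ℂ)) : Prop where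
  states : ∀ n, ∀ ρ ∈ M n, IsState ρ
  convex : ∀ n, Convex ℝ (M n)
  closed : ∀ n, IsClosed (M n)
  full_rank : ∃ ω ∈ M 1, Matrix.PosDef ω
  perm : ∀ n (π : Equiv.Perm (Fin n)), ∀ ρ ∈ M n, permAct π ρ ∈ M n
  ptrace : ∀ n, ∀ ρ ∈ M (n + 1), ptraceLast ρ ∈ M n
  tensor : ∀ n m, ∀ ρ ∈ M n, ∀ σ ∈ M m, kron ρ σ ∈ M (n + m)

/-- The tensor product `E ⊗ id_m` of a linear map on matrices with the identity. -/
def tensorId (E : Matrix ι ι ℂ →ₗ[ℂ] Matrix κ κ ℂ) (m : ℕ)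
    (M : Matrix (ι × Fin m) (ι × Fin m) ℂ) : Matrix (κ × Fin m) (κ × Fin m) ℂ :=
  Matrix.of fun p q => E (Matrix.of fun a b => M (a, p.2) (b, q.2)) p.1 q.1

/-- Partial trace over the second (B) factor. -/
def ptraceB {dA dB : ℕ} (M : Matrix (Fin dA × Fin dB) (Fin dA × Fin dB) ℂ) :
    Matrix (Fin dA) (Fin dA) ℂ :=
  Matrix.of fun a a' => ∑ b, M (a, b) (a', b)

/-- Partial trace over the first (A) factor. -/
def ptraceA {dA dB : ℕ} (M : Matrix (Fin dA × Fin dB) (Fin dA × Fin dB) ℂ) :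
    Matrix (Fin dB) (Fin dB) ℂ :=
  Matrix.of fun b b' => ∑ a, M (a, b) (a, b')

open Matrix

section PsdSqrt

variable {ι : Type*} [Fintype ι] [DecidableEq ι]

open scoped MatrixOrder in
lemma psdSqrt_eq_sqrt {M : Matrix ι ι ℂ} (hM : M.PosSemidef) : psdSqrt M = CFC.sqrt M := by
  rw [psdSqrt, dif_pos hM, CFC.sqrt_eq_real_sqrt M hM.nonneg, cfcₙ_eq_cfc, hM.1.cfc_eq]
  rfl

open scoped MatrixOrder in
lemma posSemidef_psdSqrt {M : Matrix ι ι ℂ} (hM : M.PosSemidef) : (psdSqrt M).PosSemidef := by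
  rw [psdSqrt_eq_sqrt hM]
  exact nonneg_iff_posSemidef.mp (CFC.sqrt_nonneg M)

open scoped MatrixOrder in
lemma psdSqrt_mul_self {M : Matrix ι ι ℂ} (hM : M.PosSemidef) : psdSqrt M * psdSqrt M = M := by
  rw [psdSqrt_eq_sqrt hM]
  exact CFC.sqrt_mul_sqrt_self M hM.nonneg

open scoped MatrixOrder in
lemma psdSqrt_eq_of_mul_self {M P : Matrix ι ι ℂ} (hP : P.PosSemidef) (h : P * P = M) :
    psdSqrt M = P := by
  have hM : M.PosSemidef := by
    simpa only [← h, hP.1.eq] using posSemidef_conjTranspose_mul_self P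
  rw [psdSqrt_eq_sqrt hM]
  exact CFC.sqrt_unique h hP.nonneg

lemma isHermitian_psdSqrt (M : Matrix ι ι ℂ) : (psdSqrt M).IsHermitian := by
  by_cases hM : M.PosSemidef
  · exact (posSemidef_psdSqrt hM).1
  · rw [psdSqrt, dif_neg hM]
    exact isHermitian_zero

end PsdSqrt

section Polar

variable {ι : Type*} [Fintype ι] [DecidableEq ι]

lemma exists_unitary_mul_diagonal_sqrt (B : Matrix ι ι ℂ) (d : ι → ℝ) (hd : 0 ≤ d)
    (hB : Bᴴ * B = diagonal (((↑) : ℝ → ℂ) ∘ d)) :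
    ∃ F : Matrix ι ι ℂ, Fᴴ * F = 1 ∧ B = F * diagonal (((↑) : ℝ → ℂ) ∘ Real.sqrt ∘ d) := by
  -- `F` extends the normalised nonzero columns of `B` to an orthonormal basis.
  let b : ι → EuclideanSpace ℂ ι := fun j => WithLp.toLp 2 fun a => B a j
  have hb : ∀ i j, inner ℂ (b i) (b j) = if i = j then (d i : ℂ) else 0 := by
    intro i j
    have : inner ℂ (b i) (b j) = (Bᴴ * B) i j := by
      simp [b, PiLp.inner_apply, mul_apply, mul_comm]
    rw [this, hB, diagonal_apply, Function.comp_apply]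
  have hsqrt : ∀ j, d j ≠ 0 → (√(d j) : ℂ) ≠ 0 := fun j hj => by
    exact_mod_cast (Real.sqrt_pos.mpr ((hd j).lt_of_ne' hj)).ne'
  let s : Set ι := {j | d j ≠ 0}
  let v : ι → EuclideanSpace ℂ ι := fun j => ((√(d j))⁻¹ : ℂ) • b j
  have hv : Orthonormal ℂ (s.domRestrict v) := by
    rw [orthonormal_iff_ite]
    rintro ⟨i, hi⟩ ⟨j, hj⟩
    simp only [Set.domRestrict, v, inner_smul_left, inner_smul_right, hb, Subtype.mk.injEq,
      map_inv₀, Complex.conj_ofReal]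
    split_ifs with hij
    · subst hij
      have hsq : (√(d i) : ℂ) ^ 2 = d i := by exact_mod_cast Real.sq_sqrt (hd i)
      have hne := hsqrt i hi
      rw [← hsq]
      field_simp
    · simp
  obtain ⟨f, hf⟩ := hv.exists_orthonormalBasis_extension_of_card_eq (by simp)
  refine ⟨(EuclideanSpace.basisFun ι ℂ).toBasis.toMatrix f, by simp, ?_⟩
  ext a j
  simp only [mul_diagonal, Module.Basis.toMatrix_apply, OrthonormalBasis.coe_toBasis_repr_apply,
    EuclideanSpace.basisFun_repr, Function.comp_apply]
  by_cases hj : d j = 0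
  · have : b j = 0 := by
      rw [← inner_self_eq_zero (𝕜 := ℂ), hb, if_pos rfl, hj, Complex.ofReal_zero]
    simpa [hj] using congr_fun (congrArg WithLp.ofLp this) a
  · rw [hf j hj]
    have hne := hsqrt j hj
    simp only [v, b, PiLp.smul_apply, smul_eq_mul]
    field_simp

lemma exists_unitary_mul_psdSqrt (M : Matrix ι ι ℂ) :
    ∃ U : Matrix ι ι ℂ, Uᴴ * U = 1 ∧ M = U * psdSqrt (Mᴴ * M) := by
  have hH := posSemidef_conjTranspose_mul_self M
  set V : Matrix ι ι ℂ := (hH.1.eigenvectorUnitary : Matrix ι ι ℂ)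
  have hV : Vᴴ * V = 1 := by simpa [V, star_eq_conjTranspose] using hH.1.eigenvectorUnitary.2.1
  have hV' : V * Vᴴ = 1 := mul_eq_one_comm.mp hV
  have hdiag : (M * V)ᴴ * (M * V) = diagonal (((↑) : ℝ → ℂ) ∘ hH.1.eigenvalues) := by
    have := hH.1.conjStarAlgAut_star_eigenvectorUnitary
    rw [Unitary.conjStarAlgAut_apply] at this
    simpa [V, star_eq_conjTranspose, Matrix.mul_assoc] using this
  obtain ⟨F, hF, hMV⟩ := exists_unitary_mul_diagonal_sqrt (M * V) _ hH.eigenvalues_nonneg hdiag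
  refine ⟨F * Vᴴ, ?_, ?_⟩
  · rw [conjTranspose_mul, conjTranspose_conjTranspose, Matrix.mul_assoc, ← Matrix.mul_assoc Fᴴ,
      hF, Matrix.one_mul, hV']
  · rw [psdSqrt, dif_pos hH]
    calc M = M * V * Vᴴ := by rw [Matrix.mul_assoc, hV', Matrix.mul_one]
      _ = F * Vᴴ * (V * diagonal (((↑) : ℝ → ℂ) ∘ Real.sqrt ∘ hH.1.eigenvalues) * Vᴴ) := by
        rw [hMV]; simp only [Matrix.mul_assoc, ← Matrix.mul_assoc Vᴴ V, hV, Matrix.one_mul]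
      _ = _ := rfl

end Polar

section TraceNorm

variable {ι : Type*} [Fintype ι] [DecidableEq ι]

lemma traceNorm_nonneg (M : Matrix ι ι ℂ) : 0 ≤ traceNorm M :=
  (Complex.nonneg_iff.mp
    (posSemidef_psdSqrt (posSemidef_conjTranspose_mul_self M)).trace_nonneg).1

lemma traceNorm_conjTranspose (M : Matrix ι ι ℂ) : traceNorm Mᴴ = traceNorm M := by
  obtain ⟨U, hU, hM⟩ := exists_unitary_mul_psdSqrt M
  set S := psdSqrt (Mᴴ * M)
  have hS : S.PosSemidef := posSemidef_psdSqrt (posSemidef_conjTranspose_mul_self M)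
  have hMM : M * Mᴴ = U * (S * S) * Uᴴ := by
    conv_lhs => rw [hM]
    rw [conjTranspose_mul, hS.1.eq]
    simp only [Matrix.mul_assoc]
  have hsqrt : psdSqrt (M * Mᴴ) = U * S * Uᴴ := by
    refine psdSqrt_eq_of_mul_self (hS.mul_mul_conjTranspose_same U) ?_
    rw [hMM]
    simp only [Matrix.mul_assoc, ← Matrix.mul_assoc Uᴴ U, hU, Matrix.one_mul]
  rw [traceNorm, traceNorm, conjTranspose_conjTranspose, hsqrt, trace_mul_comm, ← Matrix.mul_assoc,
    hU, Matrix.one_mul]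

lemma re_trace_unitary_mul_le {U P : Matrix ι ι ℂ} (hU : Uᴴ * U = 1) (hP : P.PosSemidef) :
    (U * P).trace.re ≤ P.trace.re := by
  -- `0 ≤ tr ((1 - U) P (1 - U)ᴴ) = 2 Re tr P - 2 Re tr (U P)`
  have h := (Complex.nonneg_iff.mp ((hP.mul_mul_conjTranspose_same (1 - U)).trace_nonneg)).1
  have hPU : (P * Uᴴ).trace.re = (U * P).trace.re := by
    rw [← hP.1.eq, ← conjTranspose_mul, trace_conjTranspose, hP.1.eq, Complex.star_def,
      Complex.conj_re]
  have hUPU : (U * P * Uᴴ).trace = P.trace := by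
    rw [trace_mul_comm, ← Matrix.mul_assoc, hU, Matrix.one_mul]
  simp only [conjTranspose_sub, conjTranspose_one, sub_mul, mul_sub, Matrix.one_mul,
    Matrix.mul_one, trace_sub, Complex.sub_re, hPU, hUPU] at h
  linarith

lemma re_trace_unitary_mul_le_traceNorm {U : Matrix ι ι ℂ} (hU : Uᴴ * U = 1) (M : Matrix ι ι ℂ) :
    (U * M).trace.re ≤ traceNorm M := by
  obtain ⟨W, hW, hM⟩ := exists_unitary_mul_psdSqrt M
  have hUW : (U * W)ᴴ * (U * W) = 1 := by
    rw [conjTranspose_mul, Matrix.mul_assoc, ← Matrix.mul_assoc Uᴴ, hU, Matrix.one_mul, hW]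
  calc (U * M).trace.re = (U * W * psdSqrt (Mᴴ * M)).trace.re := by
        rw [Matrix.mul_assoc, ← hM]
    _ ≤ traceNorm M :=
        re_trace_unitary_mul_le hUW (posSemidef_psdSqrt (posSemidef_conjTranspose_mul_self M))

lemma re_trace_conjTranspose_mul_le (A B : Matrix ι ι ℂ) :
    (Aᴴ * B).trace.re ≤ traceNorm (psdSqrt (Aᴴ * A) * psdSqrt (Bᴴ * B)) := by
  obtain ⟨U, hU, hA⟩ := exists_unitary_mul_psdSqrt A
  obtain ⟨V, hV, hB⟩ := exists_unitary_mul_psdSqrt B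
  set P := psdSqrt (Aᴴ * A)
  set Q := psdSqrt (Bᴴ * B)
  have hUV : (Uᴴ * V)ᴴ * (Uᴴ * V) = 1 := by
    rw [conjTranspose_mul, conjTranspose_conjTranspose, Matrix.mul_assoc, ← Matrix.mul_assoc U,
      mul_eq_one_comm.mp hU, Matrix.one_mul, hV]
  have htr : (Aᴴ * B).trace = (Uᴴ * V * (P * Q)ᴴ).trace := by
    conv_lhs => rw [hA, hB]
    rw [conjTranspose_mul, conjTranspose_mul, (isHermitian_psdSqrt _).eq,
      (isHermitian_psdSqrt _).eq, Matrix.mul_assoc, trace_mul_comm]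
    simp only [Matrix.mul_assoc]
    rfl
  rw [htr, ← traceNorm_conjTranspose (P * Q)]
  exact re_trace_unitary_mul_le_traceNorm hUV _

end TraceNorm

section Blocks

variable {ι κ : Type*} [Fintype ι] [DecidableEq ι] [Fintype κ]

lemma posSemidef_fromBlocks_zero {A : Matrix ι ι ℂ} (hA : A.PosSemidef) :
    (fromBlocks A 0 0 (0 : Matrix κ κ ℂ)).PosSemidef := by
  have h : fromBlocks A 0 0 (0 : Matrix κ κ ℂ)
      = (fromBlocks (psdSqrt A) 0 0 (0 : Matrix κ κ ℂ))ᴴ * fromBlocks (psdSqrt A) 0 0 0 := by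
    simp [fromBlocks_conjTranspose, fromBlocks_multiply, (isHermitian_psdSqrt A).eq,
      psdSqrt_mul_self hA]
  rw [h]
  exact posSemidef_conjTranspose_mul_self _

variable [DecidableEq κ]

lemma psdSqrt_fromBlocks_zero {A : Matrix ι ι ℂ} (hA : A.PosSemidef) :
    psdSqrt (fromBlocks A 0 0 (0 : Matrix κ κ ℂ)) = fromBlocks (psdSqrt A) 0 0 0 :=
  psdSqrt_eq_of_mul_self (posSemidef_fromBlocks_zero (posSemidef_psdSqrt hA))
    (by simp [fromBlocks_multiply, psdSqrt_mul_self hA])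

lemma traceNorm_fromBlocks_zero (M : Matrix ι ι ℂ) :
    traceNorm (fromBlocks M 0 0 (0 : Matrix κ κ ℂ)) = traceNorm M := by
  rw [traceNorm, traceNorm, fromBlocks_conjTranspose]
  simp [fromBlocks_multiply, psdSqrt_fromBlocks_zero (posSemidef_conjTranspose_mul_self M),
    trace, Fintype.sum_sum_type]

end Blocks

section FidelityBlocks

variable {ι : Type*} [Fintype ι] [DecidableEq ι]

lemma re_trace_le_traceNorm_of_posSemidef_fromBlocks {P X C Q : Matrix ι ι ℂ}
    (hT : (fromBlocks P X C Q).PosSemidef) :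
    X.trace.re ≤ traceNorm (psdSqrt P * psdSqrt Q) := by
  obtain ⟨N, hTN⟩ : ∃ N : Matrix (ι ⊕ ι) (ι ⊕ ι) ℂ, fromBlocks P X C Q = Nᴴ * N :=
    ⟨_, by rw [(isHermitian_psdSqrt _).eq, psdSqrt_mul_self hT]⟩
  have hN : ∀ J J' : Matrix (ι ⊕ ι) (ι ⊕ ι) ℂ,
      (N * J)ᴴ * (N * J') = Jᴴ * fromBlocks P X C Q * J' := by
    intro J J'
    rw [hTN, conjTranspose_mul]
    simp only [Matrix.mul_assoc]
  -- `N * J₁` and `N * J₂` are the two block columns of `N`, both moved to the first one.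
  let J₁ : Matrix (ι ⊕ ι) (ι ⊕ ι) ℂ := fromBlocks 1 0 0 0
  let J₂ : Matrix (ι ⊕ ι) (ι ⊕ ι) ℂ := fromBlocks 0 0 1 0
  have hP : P.PosSemidef := hT.submatrix Sum.inl
  have hQ : Q.PosSemidef := hT.submatrix Sum.inr
  have h := re_trace_conjTranspose_mul_le (N * J₁) (N * J₂)
  simp only [hN, J₁, J₂, fromBlocks_conjTranspose, fromBlocks_multiply] at h
  simpa [psdSqrt_fromBlocks_zero hP, psdSqrt_fromBlocks_zero hQ, fromBlocks_multiply,
    traceNorm_fromBlocks_zero, trace, Fintype.sum_sum_type] using h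

lemma exists_posSemidef_fromBlocks_re_trace_eq {ρ σ : Matrix ι ι ℂ} (hρ : ρ.PosSemidef)
    (hσ : σ.PosSemidef) : ∃ X : Matrix ι ι ℂ,
      (fromBlocks ρ X Xᴴ σ).PosSemidef ∧ X.trace.re = traceNorm (psdSqrt ρ * psdSqrt σ) := by
  set A := psdSqrt ρ
  set B := psdSqrt σ
  have hA : Aᴴ = A := (isHermitian_psdSqrt ρ).eq
  have hB : Bᴴ = B := (isHermitian_psdSqrt σ).eq
  obtain ⟨W, hW, hAB⟩ := exists_unitary_mul_psdSqrt (A * B)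
  refine ⟨A * W * B, ?_, ?_⟩
  · have hgram : fromBlocks ρ (A * W * B) (A * W * B)ᴴ σ
        = (fromBlocks A (W * B) 0 0)ᴴ * fromBlocks A (W * B) 0 0 := by
      have hAA : A * A = ρ := psdSqrt_mul_self hρ
      have hBB : B * B = σ := psdSqrt_mul_self hσ
      simp only [fromBlocks_conjTranspose, fromBlocks_multiply, conjTranspose_mul, hA, hB,
        Matrix.mul_assoc, ← Matrix.mul_assoc Wᴴ W, hW, Matrix.one_mul, hAA, hBB]
      simp
    rw [hgram]
    exact posSemidef_conjTranspose_mul_self _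
  · have htr : (A * W * B).trace = (W * (A * B)ᴴ).trace := by
      rw [conjTranspose_mul, hA, hB, trace_mul_comm, ← Matrix.mul_assoc, trace_mul_comm]
    rw [htr]
    conv_lhs => rw [hAB]
    rw [conjTranspose_mul, (isHermitian_psdSqrt _).eq, ← Matrix.mul_assoc, trace_mul_comm,
      ← Matrix.mul_assoc, hW, Matrix.one_mul]
    rfl

end FidelityBlocks

section Channel

variable {ι κ : Type*}

def IsTwoPositive (E : Matrix ι ι ℂ →ₗ[ℂ] Matrix κ κ ℂ) : Prop :=
  ∀ X : Matrix (ι × Fin 2) (ι × Fin 2) ℂ, X.PosSemidef → (tensorId E 2 X).PosSemidef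

lemma posSemidef_fromBlocks_map (E : Matrix ι ι ℂ →ₗ[ℂ] Matrix κ κ ℂ)
    (hE : IsTwoPositive E)
    {A B C D : Matrix ι ι ℂ} (h : (fromBlocks A B C D).PosSemidef) :
    (fromBlocks (E A) (E B) (E C) (E D)).PosSemidef := by
  let f : ι × Fin 2 → ι ⊕ ι := fun p => if p.2 = 0 then Sum.inl p.1 else Sum.inr p.1
  let g : κ ⊕ κ → κ × Fin 2 := Sum.elim (·, 0) (·, 1)
  convert (hE _ (h.submatrix f)).submatrix g using 1
  ext (a | a) (b | b) <;> rfl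

variable [Fintype ι] [DecidableEq ι]

lemma posSemidef_map (E : Matrix ι ι ℂ →ₗ[ℂ] Matrix κ κ ℂ) (hE : IsTwoPositive E)
    {A : Matrix ι ι ℂ} (hA : A.PosSemidef) : (E A).PosSemidef :=
  (posSemidef_fromBlocks_map E hE (posSemidef_fromBlocks_zero (κ := ι) hA)).submatrix Sum.inl

lemma dmax_map_le (E : Matrix ι ι ℂ →ₗ[ℂ] Matrix κ κ ℂ) (hE : IsTwoPositive E)
    (ρ σ : Matrix ι ι ℂ) : Dmax (E ρ) (E σ) ≤ Dmax ρ σ :=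
  iInf₂_mono' fun l hl =>
    ⟨l, by simpa only [map_sub, map_smul] using posSemidef_map E hE hl, le_rfl⟩

variable [Fintype κ] [DecidableEq κ]

lemma fidelity_le_fidelity_map {ρ σ : Matrix ι ι ℂ} (hρ : ρ.PosSemidef) (hσ : σ.PosSemidef)
    (E : Matrix ι ι ℂ →ₗ[ℂ] Matrix κ κ ℂ) (hTP : ∀ X : Matrix ι ι ℂ, (E X).trace = X.trace)
    (hE : IsTwoPositive E) : fidelity ρ σ ≤ fidelity (E ρ) (E σ) := by
  obtain ⟨X, hX, hXtr⟩ := exists_posSemidef_fromBlocks_re_trace_eq hρ hσ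
  have h := re_trace_le_traceNorm_of_posSemidef_fromBlocks (posSemidef_fromBlocks_map E hE hX)
  rw [hTP, hXtr] at h
  exact pow_le_pow_left₀ (traceNorm_nonneg _) h 2

lemma purifiedDist_map_le {ρ σ : Matrix ι ι ℂ} (hρ : ρ.PosSemidef) (hσ : σ.PosSemidef)
    (E : Matrix ι ι ℂ →ₗ[ℂ] Matrix κ κ ℂ) (hTP : ∀ X : Matrix ι ι ℂ, (E X).trace = X.trace)
    (hE : IsTwoPositive E) : purifiedDist (E ρ) (E σ) ≤ purifiedDist ρ σ :=
  Real.sqrt_le_sqrt (sub_le_sub_left (fidelity_le_fidelity_map hρ hσ E hTP hE) 1)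

end Channel

theorem dpi_smooth_dmax_general
    {ι κ : Type*} [Fintype ι] [DecidableEq ι] [Fintype κ] [DecidableEq κ]
    (ε : ℝ)
    (ρ σ : Matrix ι ι ℂ) (hρ : IsState ρ)
    (E : Matrix ι ι ℂ →ₗ[ℂ] Matrix κ κ ℂ)
    (hTP : ∀ X : Matrix ι ι ℂ, (E X).trace = X.trace)
    (hCP : ∀ (m : ℕ) (X : Matrix (ι × Fin m) (ι × Fin m) ℂ),
        X.PosSemidef → (tensorId E m X).PosSemidef) :
    DmaxSmooth ε (E ρ) (E σ) ≤ DmaxSmooth ε ρ σ := by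
  have hE : IsTwoPositive E := hCP 2
  refine le_iInf₂ fun ρ' ⟨⟨hρ'psd, hρ'tr⟩, hdist⟩ => ?_
  have hmem : E ρ' ∈ ball ε (E ρ) :=
    ⟨⟨posSemidef_map E hE hρ'psd, by rw [hTP, hρ'tr]⟩,
      (purifiedDist_map_le hρ.1 hρ'psd E hTP hE).trans hdist⟩
  exact (iInf₂_le _ hmem).trans (dmax_map_le E hE ρ' σ)

/-- **Data-processing inequality for the smooth max-relative entropy** under a
trace-preserving completely positive map. -/
theorem dpi_smooth_dmax
    {ι κ : Type*} [Fintype ι] [DecidableEq ι] [Fintype κ] [DecidableEq κ]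
    (ε : ℝ) (hε : ε ∈ Set.Ioo (0 : ℝ) 1)
    (ρ σ : Matrix ι ι ℂ) (hρ : IsState ρ) (hσ : IsState σ)
    (E : Matrix ι ι ℂ →ₗ[ℂ] Matrix κ κ ℂ)
    (hTP : ∀ X : Matrix ι ι ℂ, (E X).trace = X.trace)
    (hCP : ∀ (m : ℕ) (X : Matrix (ι × Fin m) (ι × Fin m) ℂ),
        X.PosSemidef → (tensorId E m X).PosSemidef) :
    DmaxSmooth ε (E ρ) (E σ) ≤ DmaxSmooth ε ρ σ :=
  dpi_smooth_dmax_general ε ρ σ hρ E hTP hCP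

end RobustStein
end
end

section
/- Continuous family of unitaries rotating a fixed unit vector to a variable one: Let K be a finite-dimensional complex Hilbert space and ξ ∈ K a unit vector. For every unit vector θ ∈ K such that the inner product ⟨ξ, θ⟩ is real and nonnegative, the operator U_θ := 1 + (|θ⟩⟨ξ| − |ξ⟩⟨θ|) + (1/(1 + ⟨ξ, θ⟩)) (|θ⟩⟨ξ| − |ξ⟩⟨θ|)² is unitary and satisfies U_θ ξ = θ; moreover, the map θ ↦ U_θ is continuous on the set {θ ∈ K : ‖θ‖ = 1, ⟨ξ, θ⟩ real and ≥ 0}. -/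
/-!
Write `A = |θ⟩⟨ξ| - |ξ⟩⟨θ|` and `t = ⟨ξ, θ⟩`, so that `U_θ = 1 + A + (1 + t)⁻¹ A²`. The operator `A`
is skew-adjoint and, for unit vectors with `t` real, satisfies `A³ = (t² - 1) A`. Since `t` is real,
`U_θ* = 1 - A + (1 + t)⁻¹ A²`, and multiplying out with the cubic relation gives
`U_θ* U_θ = U_θ U_θ* = 1 + (2c - 1 + c² (t² - 1)) A²` with `c = (1 + t)⁻¹`, whose scalar vanishes.
Continuity holds wherever `1 + t ≠ 0`, in particular when `Re t ≥ 0`.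
-/

noncomputable section

open scoped InnerProductSpace

/-- The operator `U_θ = 1 + (|θ⟩⟨ξ| − |ξ⟩⟨θ|) + (1/(1+⟨ξ,θ⟩))(|θ⟩⟨ξ| − |ξ⟩⟨θ|)²`,
where `|θ⟩⟨ξ|` is the rank-one operator `v ↦ ⟨ξ, v⟩ θ`. -/
def rotOp {K : Type*} [NormedAddCommGroup K] [InnerProductSpace ℂ K] (ξ θ : K) :
    K →L[ℂ] K :=
  1 + ((innerSL ℂ ξ).smulRight θ - (innerSL ℂ θ).smulRight ξ) +
    (((1 : ℂ) + (inner ℂ ξ θ : ℂ))⁻¹) •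
      ((((innerSL ℂ ξ).smulRight θ - (innerSL ℂ θ).smulRight ξ)) *
        (((innerSL ℂ ξ).smulRight θ - (innerSL ℂ θ).smulRight ξ)))

theorem one_add_add_smul_mul_self_mem_unitary {𝕜 R : Type*} [Field 𝕜] [StarRing 𝕜] [Ring R]
    [StarRing R] [Algebra 𝕜 R] [StarModule 𝕜 R] {A : R} {t : 𝕜} (hA : star A = -A)
    (ht : star t = t) (hcube : A * A * A = (t ^ 2 - 1) • A) (hne : 1 + t ≠ 0) :
    1 + A + (1 + t)⁻¹ • (A * A) ∈ unitary R := by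
  set c := (1 + t)⁻¹
  have hc : 2 * c - 1 + c ^ 2 * (t ^ 2 - 1) = 0 := by
    simp only [c]
    field_simp
    ring
  have hstar : star (1 + A + c • (A * A)) = 1 - A + c • (A * A) := by
    simp only [star_add, star_one, star_smul, star_mul, hA, neg_mul_neg, c, star_inv₀, ht]
    abel
  rw [Unitary.mem_iff, hstar]
  constructor <;>
  · simp only [mul_add, add_mul, sub_mul, mul_sub, smul_mul_assoc, mul_smul_comm, smul_smul,
      one_mul, mul_one, ← mul_assoc, hcube]
    linear_combination (norm := module) hc • (A * A)

section

variable {K : Type*} [NormedAddCommGroup K] [InnerProductSpace ℂ K]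

def rotSkew (ξ θ : K) : K →L[ℂ] K :=
  (innerSL ℂ ξ).smulRight θ - (innerSL ℂ θ).smulRight ξ

@[simp]
theorem rotSkew_apply (ξ θ v : K) : rotSkew ξ θ v = ⟪ξ, v⟫_ℂ • θ - ⟪θ, v⟫_ℂ • ξ := rfl

theorem rotOp_eq (ξ θ : K) :
    rotOp ξ θ = 1 + rotSkew ξ θ + (1 + ⟪ξ, θ⟫_ℂ)⁻¹ • (rotSkew ξ θ * rotSkew ξ θ) := rfl

theorem adjoint_rotSkew [CompleteSpace K] (ξ θ : K) :
    ContinuousLinearMap.adjoint (rotSkew ξ θ) = -rotSkew ξ θ := by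
  refine ((ContinuousLinearMap.eq_adjoint_iff _ _).2 fun x y => ?_).symm
  simp only [neg_apply, rotSkew_apply, inner_sub_left, inner_sub_right, inner_smul_left,
    inner_smul_right, inner_neg_left, inner_conj_symm]
  ring

theorem rotSkew_mul_rotSkew_mul_rotSkew {ξ θ : K} (h : ⟪θ, ξ⟫_ℂ = ⟪ξ, θ⟫_ℂ) :
    rotSkew ξ θ * rotSkew ξ θ * rotSkew ξ θ =
      (⟪ξ, θ⟫_ℂ ^ 2 - ⟪ξ, ξ⟫_ℂ * ⟪θ, θ⟫_ℂ) • rotSkew ξ θ := by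
  ext v
  simp only [mul_apply_eq_comp, smul_apply, rotSkew_apply, inner_sub_right, inner_smul_right, h]
  module

theorem rotOp_mem_unitary [CompleteSpace K] {ξ θ : K} (hξ : ‖ξ‖ = 1) (hθ : ‖θ‖ = 1)
    (h : ⟪θ, ξ⟫_ℂ = ⟪ξ, θ⟫_ℂ) (hne : 1 + ⟪ξ, θ⟫_ℂ ≠ 0) : rotOp ξ θ ∈ unitary (K →L[ℂ] K) := by
  rw [rotOp_eq]
  refine one_add_add_smul_mul_self_mem_unitary ?_ ((inner_conj_symm θ ξ).trans h) ?_ hne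
  · rw [ContinuousLinearMap.star_eq_adjoint, adjoint_rotSkew]
  · rw [rotSkew_mul_rotSkew_mul_rotSkew h, inner_self_eq_norm_sq_to_K,
      inner_self_eq_norm_sq_to_K, hξ, hθ]
    norm_num

theorem rotOp_apply_self {ξ θ : K} (hξ : ‖ξ‖ = 1) (hθ : ‖θ‖ = 1) (h : ⟪θ, ξ⟫_ℂ = ⟪ξ, θ⟫_ℂ)
    (hne : 1 + ⟪ξ, θ⟫_ℂ ≠ 0) : rotOp ξ θ ξ = θ := by
  simp only [rotOp_eq, add_apply, smul_apply, one_apply_eq_self, mul_apply_eq_comp,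
    rotSkew_apply, inner_sub_right, inner_smul_right, inner_self_eq_norm_sq_to_K, hξ, hθ, h]
  match_scalars <;> field_simp <;> ring

theorem continuous_rotSkew (ξ : K) : Continuous (rotSkew ξ) := by
  unfold rotSkew
  fun_prop

theorem continuousOn_rotOp (ξ : K) : ContinuousOn (rotOp ξ) {θ | 1 + ⟪ξ, θ⟫_ℂ ≠ 0} := by
  have hinv : ContinuousOn (fun θ => (1 + ⟪ξ, θ⟫_ℂ)⁻¹) {θ | 1 + ⟪ξ, θ⟫_ℂ ≠ 0} :=
    (continuous_const.add (continuous_const.inner continuous_id)).continuousOn.inv₀ fun _ h => h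
  have hskew := (continuous_rotSkew ξ).continuousOn (s := {θ | 1 + ⟪ξ, θ⟫_ℂ ≠ 0})
  exact (continuousOn_const.add hskew).add (hinv.smul (hskew.mul hskew))

end

/-- **Continuous family of unitaries rotating a fixed unit vector to a variable one**:
for every unit vector θ with `⟨ξ, θ⟩` real and nonnegative, `U_θ` is unitary and maps
ξ to θ, and `θ ↦ U_θ` is continuous on this set of vectors θ. -/
theorem rotOp_unitary_and_continuous
    {K : Type*} [NormedAddCommGroup K] [InnerProductSpace ℂ K] [FiniteDimensional ℂ K]
    (ξ : K) (hξ : ‖ξ‖ = 1) :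
    (∀ θ : K, ‖θ‖ = 1 → (inner ℂ ξ θ : ℂ).im = 0 → 0 ≤ (inner ℂ ξ θ : ℂ).re →
      rotOp ξ θ ∈ unitary (K →L[ℂ] K) ∧ rotOp ξ θ ξ = θ) ∧
    ContinuousOn (fun θ : K => rotOp ξ θ)
      {θ : K | ‖θ‖ = 1 ∧ (inner ℂ ξ θ : ℂ).im = 0 ∧ 0 ≤ (inner ℂ ξ θ : ℂ).re} := by
  have inner_symm_of_im_eq_zero {θ : K} (him : (⟪ξ, θ⟫_ℂ).im = 0) : ⟪θ, ξ⟫_ℂ = ⟪ξ, θ⟫_ℂ := by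
    rw [← inner_conj_symm, Complex.conj_eq_iff_im.2 him]
  have one_add_inner_ne_zero {θ : K} (hre : 0 ≤ (⟪ξ, θ⟫_ℂ).re) : 1 + ⟪ξ, θ⟫_ℂ ≠ 0 := fun h => by
    have := congrArg Complex.re h
    simp only [Complex.add_re, Complex.one_re, Complex.zero_re] at this
    linarith
  refine ⟨fun θ hθ him hre => ?_, (continuousOn_rotOp ξ).mono fun θ hθ => ?_⟩
  · exact ⟨rotOp_mem_unitary hξ hθ (inner_symm_of_im_eq_zero him) (one_add_inner_ne_zero hre),
      rotOp_apply_self hξ hθ (inner_symm_of_im_eq_zero him) (one_add_inner_ne_zero hre)⟩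
  · exact one_add_inner_ne_zero hθ.2.2
end
end
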